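/- For every x ∈ E_{M,θ}(α) and every k ≥ N_0, the inserted digits are monotone: ℓ_{n_{k+1}}(x) ≥ ℓ_{n_k}(x). Consequently L_{n,θ}(x) = ℓ_{n_k}(x) for all n with n_k ≤ n < n_{k+1} and k ≥ N_0 sufficiently large. -/

import Mathlib

/-!
Since every non-inserted digit is at least `m`, the prefix sum before `n_k` is at least
`m (n_k - 1)`, so condition (A) forces every inserted digit above `M`, hence above every
non-inserted digit. For monotonicity write `a_k = ⌊α S_k / D_k⌋` for the inserted digit, with
`S_k` the prefix sum before `n_k` and `D_k = log n_k · log log n_k`. Passing from `k` to `k + 1`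
adds at least `a_k` to the prefix sum, while by (B) the denominator grows by less than `α / 2`;
since `α S_k / D_k < a_k + 1 ≤ 2 a_k` gives `a_k D_k > α S_k / 2`, the ratio `α S_k / D_k` cannot decrease.
-/

open Filter Real

noncomputable section

/-- The generalized Gauss map `T_θ`. -/
def gaussMap (θ : ℝ) (x : ℝ) : ℝ := if x = 0 then 0 else 1 / x - θ * ⌊1 / (θ * x)⌋

/-- The `n`-th digit (1-indexed) of the θ-expansion of `x`: `ℓ_n(x) = ⌊1/(θ·T_θ^{n−1}(x))⌋`. -/
def digit (θ : ℝ) (x : ℝ) (n : ℕ) : ℤ := ⌊1 / (θ * (gaussMap θ)^[n - 1] x)⌋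

/-- `S_{n,θ}(x)`, the sum of the first `n` digits. -/
def Sdig (θ : ℝ) (x : ℝ) (n : ℕ) : ℤ := ∑ k ∈ Finset.Icc 1 n, digit θ x k

/-- `L_{n,θ}(x)`, the maximum of the first `n` digits. -/
def Ldig (θ : ℝ) (x : ℝ) (n : ℕ) : ℤ :=
  if h : 1 ≤ n then (Finset.Icc 1 n).sup' (Finset.nonempty_Icc.mpr h) (digit θ x) else 0

/-- The ratio `L_{n,θ}(x)·log n·log log n / (S_{n,θ}(x) − L_{n,θ}(x))`. -/
def ratioFun (θ : ℝ) (x : ℝ) (n : ℕ) : ℝ :=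
  ((Ldig θ x n : ℝ) * Real.log n * Real.log (Real.log n)) /
    ((Sdig θ x n : ℝ) - (Ldig θ x n : ℝ))

/-- The level set `E_θ(α)` of irrationals in `[0,θ]` where the ratio tends to `α`. -/
def Eset (θ α : ℝ) : Set ℝ :=
  {x | x ∈ Set.Icc 0 θ ∧ Irrational x ∧
    Tendsto (fun n => ratioFun θ x n) atTop (nhds α)}

/-- The sparse sequence `n_k = ⌊exp(k^{3/4})⌋`. -/
def sparseSeq (k : ℕ) : ℕ := ⌊Real.exp ((k : ℝ) ^ ((3 : ℝ) / 4))⌋₊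

/-- The technical conditions (A), (B), (C) on the cutoff `N0`, required to hold
for every `k ≥ N0`. -/
def N0Cond (α : ℝ) (m M : ℕ) (N0 : ℕ) : Prop :=
  ∀ k : ℕ, N0 ≤ k →
    (α * m * ((sparseSeq k : ℝ) - 1) /
        (Real.log (sparseSeq k) * Real.log (Real.log (sparseSeq k))) > (M : ℝ) + 1) ∧
    (Real.log (sparseSeq (k + 1)) * Real.log (Real.log (sparseSeq (k + 1))) -
        Real.log (sparseSeq k) * Real.log (Real.log (sparseSeq k)) < α / 2) ∧
    ((sparseSeq (k + 1) : ℝ) - (sparseSeq k : ℝ) <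
        (sparseSeq k : ℝ) / (k : ℝ) ^ ((1 : ℝ) / 8))

/-- `i` is one of the insertion positions `n_k`, `k ≥ N0`. -/
def insertedPos (N0 : ℕ) (i : ℕ) : Prop := ∃ k : ℕ, N0 ≤ k ∧ i = sparseSeq k

/-- The constructed set `E_{M,θ}(α)`: irrationals in `[0,θ]` whose digit at each
insertion position `n_k` (`k ≥ N0`) equals
`⌊α·(Σ_{i=1}^{n_k−1} ℓ_i(x)) / (log n_k · log log n_k)⌋`, and whose digits at all
other positions lie in `[m, M]`. -/
def EMset (θ α : ℝ) (m M N0 : ℕ) : Set ℝ :=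
  {x | x ∈ Set.Icc 0 θ ∧ Irrational x ∧
    (∀ k : ℕ, N0 ≤ k →
      digit θ x (sparseSeq k) =
        ⌊α * (∑ i ∈ Finset.Icc 1 (sparseSeq k - 1), (digit θ x i : ℝ)) /
          (Real.log (sparseSeq k) * Real.log (Real.log (sparseSeq k)))⌋) ∧
    (∀ i : ℕ, 1 ≤ i → ¬ insertedPos N0 i →
      (m : ℤ) ≤ digit θ x i ∧ digit θ x i ≤ (M : ℤ))}

open Finset

def logLogScale (n : ℕ) : ℝ := Real.log n * Real.log (Real.log n)

def prefixSum (d : ℕ → ℤ) (n : ℕ) : ℝ := ∑ i ∈ Icc 1 n, (d i : ℝ)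

def insertionRatio (α : ℝ) (d : ℕ → ℤ) (k : ℕ) : ℝ :=
  α * prefixSum d (sparseSeq k - 1) / logLogScale (sparseSeq k)

/-- The digit sequence of a point of `EMset`, with the θ-expansion forgotten. -/
structure IsInsertedSeq (α : ℝ) (m M N0 : ℕ) (d : ℕ → ℤ) : Prop where
  inserted : ∀ k, N0 ≤ k → d (sparseSeq k) = ⌊insertionRatio α d k⌋
  bounded : ∀ i, 1 ≤ i → ¬ insertedPos N0 i → (m : ℤ) ≤ d i ∧ d i ≤ M

theorem isInsertedSeq_of_mem_EMset {θ α : ℝ} {m M N0 : ℕ} {x : ℝ} (hx : x ∈ EMset θ α m M N0) :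
    IsInsertedSeq α m M N0 (digit θ x) :=
  ⟨hx.2.2.1, hx.2.2.2⟩

theorem one_le_sparseSeq (k : ℕ) : 1 ≤ sparseSeq k :=
  Nat.le_floor <| by simpa using Real.one_le_exp (by positivity)

theorem sparseSeq_mono : Monotone sparseSeq := fun _ _ hab =>
  Nat.floor_mono <| Real.exp_le_exp.mpr <|
    Real.rpow_le_rpow (Nat.cast_nonneg _) (Nat.cast_le.mpr hab) (by norm_num)

theorem div_le_div_of_add_floor_le {α S S' D D' : ℝ} (hα : 0 < α) (hD : 0 < D) (hD' : 0 < D')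
    (hDD' : D' - D < α / 2) (hfloor : 1 ≤ ⌊α * S / D⌋) (hSS' : S + ⌊α * S / D⌋ ≤ S') :
    α * S / D ≤ α * S' / D' := by
  have ha : (1 : ℝ) ≤ ⌊α * S / D⌋ := by exact_mod_cast hfloor
  set a : ℝ := ((⌊α * S / D⌋ : ℤ) : ℝ)
  have hS : 0 < S := by
    have : 0 < α * S / D := lt_of_lt_of_le one_pos (ha.trans (Int.floor_le _))
    exact pos_of_mul_pos_right ((div_pos_iff_of_pos_right hD).mp this) hα.le
  have haD : α * S < 2 * a * D := by
    have := (div_lt_iff₀ hD).mp (Int.lt_floor_add_one (α * S / D))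
    nlinarith
  have key : S * D' ≤ S' * D :=
    calc S * D' ≤ S * D + S * (α / 2) := by nlinarith
      _ ≤ S * D + a * D := by linarith
      _ = (S + a) * D := by ring
      _ ≤ S' * D := mul_le_mul_of_nonneg_right hSS' hD.le
  rw [div_le_div_iff₀ hD hD']
  nlinarith

theorem mul_le_prefixSum {d : ℕ → ℤ} {c : ℝ} {n : ℕ} (h : ∀ i ∈ Icc 1 n, c ≤ d i) :
    c * n ≤ prefixSum d n := by
  unfold prefixSum
  simpa [mul_comm] using card_nsmul_le_sum (Icc 1 n) (fun i => (d i : ℝ)) c h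

theorem prefixSum_pred_add_le {d : ℕ → ℤ} {n N : ℕ} (hn : 1 ≤ n) (hnN : n ≤ N)
    (hd : ∀ i ∈ Icc 1 N, 0 ≤ d i) : prefixSum d (n - 1) + d n ≤ prefixSum d N := by
  have hsplit : prefixSum d (n - 1) + d n = prefixSum d n := by
    unfold prefixSum
    obtain ⟨j, rfl⟩ := Nat.exists_eq_add_of_le' hn
    rw [sum_Icc_succ_top (by omega)]
    rfl
  rw [hsplit]
  refine sum_le_sum_of_subset_of_nonneg (Icc_subset_Icc le_rfl hnN) fun i hi _ => ?_
  exact_mod_cast hd i hi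

namespace N0Cond

variable {α : ℝ} {m M N0 k : ℕ}

theorem logLogScale_pos (hα : 0 < α) (hN0 : N0Cond α m M N0) (hk : N0 ≤ k) :
    0 < logLogScale (sparseSeq k) := by
  have hA : (M : ℝ) + 1 < α * m * ((sparseSeq k : ℝ) - 1) / logLogScale (sparseSeq k) :=
    (hN0 k hk).1
  have hnum : 0 ≤ α * m * ((sparseSeq k : ℝ) - 1) := by
    have : (1 : ℝ) ≤ sparseSeq k := by exact_mod_cast one_le_sparseSeq k
    have : 0 ≤ (sparseSeq k : ℝ) - 1 := by linarith
    positivity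
  by_contra hle
  linarith [div_nonpos_of_nonneg_of_nonpos hnum (not_lt.mp hle), (M.cast_nonneg : (0 : ℝ) ≤ M)]

theorem lt_insertionRatio {d : ℕ → ℤ} (hα : 0 < α) (hN0 : N0Cond α m M N0) (hk : N0 ≤ k)
    (hd : ∀ i ∈ Icc 1 (sparseSeq k - 1), (m : ℤ) ≤ d i) :
    (M : ℝ) + 1 < insertionRatio α d k := by
  have hsum : (m : ℝ) * ((sparseSeq k : ℝ) - 1) ≤ prefixSum d (sparseSeq k - 1) := by
    have := mul_le_prefixSum (c := m) fun i hi => by exact_mod_cast hd i hi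
    rwa [Nat.cast_sub (one_le_sparseSeq k), Nat.cast_one] at this
  calc (M : ℝ) + 1 < α * m * ((sparseSeq k : ℝ) - 1) / logLogScale (sparseSeq k) :=
        (hN0 k hk).1
    _ ≤ insertionRatio α d k := by
      rw [insertionRatio, mul_assoc]
      gcongr
      exact (logLogScale_pos hα hN0 hk).le

end N0Cond

namespace IsInsertedSeq

variable {α : ℝ} {m M N0 : ℕ} {d : ℕ → ℤ} {k : ℕ}

theorem le_digit (hd : IsInsertedSeq α m M N0 d) (hα : 0 < α) (hmM : m ≤ M + 1)
    (hN0 : N0Cond α m M N0) {i : ℕ} (hi : 1 ≤ i) : (m : ℤ) ≤ d i := by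
  induction i using Nat.strong_induction_on with
  | _ i ih =>
    by_cases hins : insertedPos N0 i
    · obtain ⟨j, hj, rfl⟩ := hins
      have hratio := hN0.lt_insertionRatio hα hj fun i' hi' =>
        ih i' (by have := one_le_sparseSeq j; simp only [mem_Icc] at hi'; omega)
          (mem_Icc.mp hi').1
      rw [hd.inserted j hj, Int.le_floor]
      push_cast
      linarith [show (m : ℝ) ≤ M + 1 by exact_mod_cast hmM]
    · exact (hd.bounded i hi hins).1

theorem lt_inserted (hd : IsInsertedSeq α m M N0 d) (hα : 0 < α) (hmM : m ≤ M + 1)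
    (hN0 : N0Cond α m M N0) (hk : N0 ≤ k) : (M : ℤ) < d (sparseSeq k) := by
  have := hN0.lt_insertionRatio hα hk fun i hi => hd.le_digit hα hmM hN0 (mem_Icc.mp hi).1
  rw [hd.inserted k hk, Int.lt_iff_add_one_le, Int.le_floor]
  push_cast
  exact this.le

theorem insertionRatio_le_succ (hd : IsInsertedSeq α m M N0 d) (hα : 0 < α) (hmM : m ≤ M + 1)
    (hN0 : N0Cond α m M N0) (hk : N0 ≤ k) :
    insertionRatio α d k ≤ insertionRatio α d (k + 1) := by
  rcases (sparseSeq_mono (Nat.le_add_right k 1)).eq_or_lt with heq | hlt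
  · simp only [insertionRatio, heq, le_rfl]
  have hfloor : d (sparseSeq k) = ⌊insertionRatio α d k⌋ := hd.inserted k hk
  have hgain : prefixSum d (sparseSeq k - 1) + d (sparseSeq k) ≤
      prefixSum d (sparseSeq (k + 1) - 1) :=
    prefixSum_pred_add_le (one_le_sparseSeq k) (by omega) fun i hi =>
      (Int.natCast_nonneg m).trans (hd.le_digit hα hmM hN0 (mem_Icc.mp hi).1)
  have hone : 1 ≤ ⌊insertionRatio α d k⌋ := by
    rw [← hfloor]
    linarith [hd.lt_inserted hα hmM hN0 hk]
  rw [hfloor] at hgain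
  exact div_le_div_of_add_floor_le hα (hN0.logLogScale_pos hα hk)
    (hN0.logLogScale_pos hα (by omega)) (hN0 k hk).2.1 hone hgain

theorem inserted_le_succ (hd : IsInsertedSeq α m M N0 d) (hα : 0 < α) (hmM : m ≤ M + 1)
    (hN0 : N0Cond α m M N0) (hk : N0 ≤ k) : d (sparseSeq k) ≤ d (sparseSeq (k + 1)) := by
  rw [hd.inserted k hk, hd.inserted (k + 1) (by omega)]
  exact Int.floor_le_floor (hd.insertionRatio_le_succ hα hmM hN0 hk)

theorem inserted_le_of_le (hd : IsInsertedSeq α m M N0 d) (hα : 0 < α) (hmM : m ≤ M + 1)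
    (hN0 : N0Cond α m M N0) {j : ℕ} (hj : N0 ≤ j) (hjk : j ≤ k) :
    d (sparseSeq j) ≤ d (sparseSeq k) := by
  induction k, hjk using Nat.le_induction with
  | base => exact le_rfl
  | succ k hjk ih => exact ih.trans (hd.inserted_le_succ hα hmM hN0 (hj.trans hjk))

theorem sup'_eq_inserted (hd : IsInsertedSeq α m M N0 d) (hα : 0 < α) (hmM : m ≤ M + 1)
    (hN0 : N0Cond α m M N0) (hk : N0 ≤ k) {n : ℕ} (hkn : sparseSeq k ≤ n)
    (hn : n < sparseSeq (k + 1)) (hne : (Icc 1 n).Nonempty) :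
    (Icc 1 n).sup' hne d = d (sparseSeq k) := by
  refine le_antisymm (sup'_le _ _ fun i hi => ?_) (le_sup' d ?_)
  · by_cases hins : insertedPos N0 i
    · obtain ⟨j, hj, rfl⟩ := hins
      have hjk : j ≤ k := by
        by_contra! hkj
        have := sparseSeq_mono (show k + 1 ≤ j by omega)
        simp only [mem_Icc] at hi
        omega
      exact hd.inserted_le_of_le hα hmM hN0 hj hjk
    · exact ((hd.bounded i (mem_Icc.mp hi).1 hins).2.trans
        (hd.lt_inserted hα hmM hN0 hk).le)
  · exact mem_Icc.mpr ⟨one_le_sparseSeq k, hkn⟩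

end IsInsertedSeq

theorem inserted_digits_monotone_general (θ : ℝ) (m : ℕ)
    (α : ℝ) (hα : 0 < α) (M : ℕ) (hM : 2 * m + 1 < M)
    (N0 : ℕ) (hN0 : N0Cond α m M N0)
    (x : ℝ) (hx : x ∈ EMset θ α m M N0) :
    (∀ k : ℕ, N0 ≤ k → digit θ x (sparseSeq k) ≤ digit θ x (sparseSeq (k + 1))) ∧
    (∃ K : ℕ, N0 ≤ K ∧ ∀ k : ℕ, K ≤ k → ∀ n : ℕ,
      sparseSeq k ≤ n → n < sparseSeq (k + 1) →
        Ldig θ x n = digit θ x (sparseSeq k)) := by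
  have hd := isInsertedSeq_of_mem_EMset hx
  have hmM : m ≤ M + 1 := by omega
  refine ⟨fun k hk => hd.inserted_le_succ hα hmM hN0 hk, N0, le_rfl,
    fun k hk n hkn hn => ?_⟩
  rw [Ldig, dif_pos ((one_le_sparseSeq k).trans hkn)]
  exact hd.sup'_eq_inserted hα hmM hN0 hk hkn hn _

/-- for `x ∈ E_{M,θ}(α)` the inserted digits are monotone:
`ℓ_{n_{k+1}}(x) ≥ ℓ_{n_k}(x)` for all `k ≥ N0`; consequently, for all sufficiently
large `k` and all `n` with `n_k ≤ n < n_{k+1}`, `L_{n,θ}(x) = ℓ_{n_k}(x)`. -/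
theorem inserted_digits_monotone (θ : ℝ) (m : ℕ) (hm : 0 < m) (hmns : ¬ IsSquare m)
    (hθ : θ ∈ Set.Ioo (0 : ℝ) 1) (hθirr : Irrational θ) (hθ2 : θ ^ 2 = 1 / m)
    (α : ℝ) (hα : 0 < α) (M : ℕ) (hM : 2 * m + 1 < M)
    (N0 : ℕ) (hN0 : N0Cond α m M N0)
    (x : ℝ) (hx : x ∈ EMset θ α m M N0) :
    (∀ k : ℕ, N0 ≤ k → digit θ x (sparseSeq k) ≤ digit θ x (sparseSeq (k + 1))) ∧
    (∃ K : ℕ, N0 ≤ K ∧ ∀ k : ℕ, K ≤ k → ∀ n : ℕ,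
      sparseSeq k ≤ n → n < sparseSeq (k + 1) →
        Ldig θ x n = digit θ x (sparseSeq k)) :=
  inserted_digits_monotone_general θ m α hα M hM N0 hN0 x hx
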